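/- arXiv:1107.0520 — 2 statements merged into one kernel-verified Lean document; each statement's English description precedes it below -/
import Mathlib

section
/- If T is a conservative measure-preserving transformation of a σ-finite measure space (X, μ) and S is a probability-preserving transformation of (Y, ν), then the product transformation T × S on (X × Y, μ × ν) is conservative. -/
/-!
Let `s` be a measurable set that is wandering for `T × S`. For fixed `x`, the points `y` with
`(T × S)^[n] (x, y) ∈ s` form pairwise disjoint sets, and since `S` preserves `ν` the `n`-th one
has measure `g (T^[n] x)`, where `g x = ν (s_x)` is the measure of the section. Hence
`∑ₙ g (T^[n] x) ≤ 1` along every orbit. A conservative `T` returns almost every point of each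
level set `{g > ε}` to it infinitely often, so a summable orbit sum forces `g = 0` a.e., that is
`(μ × ν) s = ∫ g dμ = 0`.
-/

open MeasureTheory Filter Set
open scoped ENNReal

theorem Function.pairwise_disjoint_preimage_iterate {α : Type*} {f : α → α} {s : Set α}
    (hs : ∀ p ∈ s, ∀ m ≠ 0, f^[m] p ∉ s) :
    Pairwise fun i j => Disjoint (f^[i] ⁻¹' s) (f^[j] ⁻¹' s) := by
  suffices ∀ i j, i < j → Disjoint (f^[i] ⁻¹' s) (f^[j] ⁻¹' s) from
    fun i j hij => hij.lt_or_gt.elim (this i j) fun h => (this j i h).symm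
  intro i j hij
  refine Set.disjoint_left.2 fun p hi hj => hs _ hi (j - i) (by omega) ?_
  rwa [← Function.iterate_add_apply, Nat.sub_add_cancel hij.le]

namespace MeasureTheory.Conservative

variable {X : Type*} [MeasurableSpace X] {μ : Measure X} {T : X → X}

theorem ae_eq_zero_of_tsum_iterate_ne_top (hc : Conservative T μ) {g : X → ℝ≥0∞}
    (hg : Measurable g) (hsum : ∀ᵐ x ∂μ, ∑' n, g (T^[n] x) ≠ ∞) : g =ᵐ[μ] 0 := by
  have hlevel : ∀ k : ℕ, ∀ᵐ x ∂μ, g x ≤ (k : ℝ≥0∞)⁻¹ := by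
    intro k
    have hA : MeasurableSet {x | (k : ℝ≥0∞)⁻¹ < g x} :=
      measurableSet_lt measurable_const hg
    filter_upwards [hc.ae_mem_imp_frequently_image_mem hA.nullMeasurableSet, hsum]
      with x hreturn hx
    by_contra hxA
    have hinf : {n | (k : ℝ≥0∞)⁻¹ < g (T^[n] x)}.Infinite :=
      Nat.frequently_atTop_iff_infinite.1 (hreturn (not_le.1 hxA))
    have hfin : {n | ¬ g (T^[n] x) < (k : ℝ≥0∞)⁻¹}.Finite :=
      (tendsto_order.1 (ENNReal.tendsto_cofinite_zero_of_tsum_ne_top hx)).2 _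
        (ENNReal.inv_pos.2 (ENNReal.natCast_ne_top k))
    exact hinf (hfin.subset fun n hn => not_lt.2 (le_of_lt hn))
  filter_upwards [ae_all_iff.2 hlevel] with x hx
  exact le_antisymm (ge_of_tendsto' ENNReal.tendsto_inv_nat_nhds_zero hx) zero_le

end MeasureTheory.Conservative

theorem MeasureTheory.tsum_measure_prodMk_preimage_iterate_le {X Y : Type*} [MeasurableSpace X]
    [MeasurableSpace Y] {ν : Measure Y} {T : X → X} {S : Y → Y} {s : Set (X × Y)}
    (hs : MeasurableSet s) (hS : MeasurePreserving S ν ν)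
    (hwand : ∀ p ∈ s, ∀ m ≠ 0, (Prod.map T S)^[m] p ∉ s) (x : X) :
    ∑' n, ν (Prod.mk (T^[n] x) ⁻¹' s) ≤ ν univ := by
  have hsection : ∀ n, MeasurableSet (S^[n] ⁻¹' (Prod.mk (T^[n] x) ⁻¹' s)) :=
    fun n => hS.measurable.iterate n (measurable_prodMk_left hs)
  have hdisj : Pairwise fun i j => Disjoint (S^[i] ⁻¹' (Prod.mk (T^[i] x) ⁻¹' s))
      (S^[j] ⁻¹' (Prod.mk (T^[j] x) ⁻¹' s)) := fun i j hij => by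
    have := (Function.pairwise_disjoint_preimage_iterate hwand hij).preimage (Prod.mk x)
    rwa [Prod.map_iterate, Prod.map_iterate] at this
  calc ∑' n, ν (Prod.mk (T^[n] x) ⁻¹' s)
      = ∑' n, ν (S^[n] ⁻¹' (Prod.mk (T^[n] x) ⁻¹' s)) := tsum_congr fun n =>
        ((hS.iterate n).measure_preimage (measurable_prodMk_left hs).nullMeasurableSet).symm
    _ = ν (⋃ n, S^[n] ⁻¹' (Prod.mk (T^[n] x) ⁻¹' s)) :=
        (measure_iUnion hdisj hsection).symm
    _ ≤ ν univ := measure_mono (subset_univ _)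

theorem poisson_paper_stmt5_general {X Y : Type*} [MeasurableSpace X] [MeasurableSpace Y]
    (μ : Measure X) [SigmaFinite μ] (ν : Measure Y) [IsProbabilityMeasure ν]
    (T : X → X) (S : Y → Y)
    (hc : Conservative T μ)
    (hS : MeasurePreserving S ν ν) :
    Conservative (Prod.map T S) (μ.prod ν) := by
  refine ⟨QuasiMeasurePreserving.prodMap hc.toQuasiMeasurePreserving hS.quasiMeasurePreserving,
    fun s hs hpos => ?_⟩
  by_contra! hwand
  have hsection_null : (fun x => ν (Prod.mk x ⁻¹' s)) =ᵐ[μ] 0 :=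
    hc.ae_eq_zero_of_tsum_iterate_ne_top (measurable_measure_prodMk_left hs) <|
      ae_of_all _ fun x =>
        ((tsum_measure_prodMk_preimage_iterate_le hs hS hwand x).trans_lt
          (measure_lt_top ν univ)).ne
  apply hpos
  rw [Measure.prod_apply hs, lintegral_congr_ae hsection_null]
  exact lintegral_zero

/-- If `T` is a conservative measure-preserving transformation of a σ-finite
measure space `(X, μ)` and `S` is a probability-preserving transformation of `(Y, ν)`, then
the product transformation `T × S` on `(X × Y, μ × ν)` is conservative. -/
theorem poisson_paper_stmt5 {X Y : Type*} [MeasurableSpace X] [MeasurableSpace Y]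
    (μ : Measure X) [SigmaFinite μ] (ν : Measure Y) [IsProbabilityMeasure ν]
    (T : X → X) (S : Y → Y)
    (hT : MeasurePreserving T μ μ) (hc : Conservative T μ)
    (hS : MeasurePreserving S ν ν) :
    Conservative (Prod.map T S) (μ.prod ν) :=
  poisson_paper_stmt5_general μ ν T S hc hS
end

section
/- Let T be a conservative ergodic measure-preserving transformation of an infinite σ-finite measure space (X, μ), and suppose the Poisson product T × T* is ergodic. Then any T-equivariant measurable map Φ : X → L¹(μ), satisfying Φ_{Tx} ∘ T = Φ_x for a.e. x, is zero: Φ_x = 0 in L¹(μ) for μ-a.e. x. -/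
open MeasureTheory Set

noncomputable section

variable {X : Type*} [MeasurableSpace X]

/-- The event that a realization `ω` (a subset of `X`) has exactly `n` points in `B`. -/
def countEvent (B : Set X) (n : ℕ) : Set (Set X) := {ω : Set X | (ω ∩ B).encard = (n : ℕ∞)}

/-- The σ-algebra `𝓑*` on the space of realizations (countable subsets of `X`),
generated by the count events `[|ω ∩ B| = n]` for measurable `B` and `n ∈ ℕ`. -/
instance (priority := 2000) starSigma (X : Type*) [MeasurableSpace X] :
    MeasurableSpace (Set X) :=
  MeasurableSpace.generateFrom
    {s : Set (Set X) | ∃ (B : Set X) (n : ℕ), MeasurableSet B ∧ s = countEvent B n}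

/-- `P` is the law of a Poisson point process on `X` with intensity `μ`:
a probability measure on `(X*, 𝓑*)` such that the number of points in a finite-measure
measurable set `B` is Poisson distributed with mean `μ(B)`, and the counts in pairwise
disjoint sets are jointly independent. -/
structure IsPoissonPP (μ : Measure X) (P : Measure (Set X)) : Prop where
  prob : P Set.univ = 1
  marginal : ∀ B : Set X, MeasurableSet B → μ B ≠ ⊤ → ∀ k : ℕ,
    P (countEvent B k) =
      ENNReal.ofReal (Real.exp (-(μ B).toReal) * (μ B).toReal ^ k / (Nat.factorial k))
  indep : ∀ (n : ℕ) (A : Fin n → Set X) (k : Fin n → ℕ),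
    (∀ i, MeasurableSet (A i)) → (∀ i, μ (A i) ≠ ⊤) →
    Pairwise (fun i j => Disjoint (A i) (A j)) →
    P (⋂ i, countEvent (A i) (k i)) = ∏ i, P (countEvent (A i) (k i))

end

/-!
Fix `t > 0` and let `D = {(x, y) | t < |Φ x y|}`. Its slices have finite measure (Chebyshev) and
equivariance makes `D` invariant under `T × T` up to a null set. Hence the event
`S = {(x, ω) | ω ∩ D_x = ∅}` is invariant under `T × T*` up to a null set, and its slice over `x`
has probability `exp (-μ D_x)`. Ergodicity of `T × T*` makes `S` null or conull: it cannot be null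
because all its slices have positive probability, so it is conull, which forces `μ D_x = 0` for
a.e. `x`.

The only delicate point is that `S` is measurable modulo null sets, although the configurations
`ω` are arbitrary subsets of `X`. Almost every `ω` has finitely many points in each set `K` of a
σ-finite exhaustion, and for such `ω` the number of points of `ω ∩ K` in `D_x` is the mass of
`D_x` under a measurable kernel of finite measures, hence jointly measurable in `(x, ω)`.
-/

open Filter ENNReal ProbabilityTheory

lemma MeasureTheory.Measure.ae_prod_mem_of_ae_ae_mem₀ {α β : Type*} [MeasurableSpace α]
    [MeasurableSpace β] {μ : Measure α} {ν : Measure β} [SFinite ν] {s : Set (α × β)}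
    (hs : NullMeasurableSet s (μ.prod ν)) (h : ∀ᵐ x ∂μ, ∀ᵐ y ∂ν, (x, y) ∈ s) :
    ∀ᵐ z ∂μ.prod ν, z ∈ s := by
  obtain ⟨t, hts, ht, hteq⟩ := hs.exists_measurable_subset_ae_eq
  have hfib := Measure.ae_ae_of_ae_prod (eventuallyEq_set.1 hteq)
  refine ((Measure.ae_prod_mem_iff_ae_ae_mem ht).2 ?_).mono fun z hz => hts hz
  filter_upwards [h, hfib] with x hx hxt
  filter_upwards [hx, hxt] with y hy hyt
  exact hyt.2 hy

noncomputable section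

variable {X : Type*} [MeasurableSpace X]

lemma measurableSet_countEvent {B : Set X} (hB : MeasurableSet B) (n : ℕ) :
    MeasurableSet (countEvent B n) :=
  MeasurableSpace.measurableSet_generateFrom ⟨B, n, hB, rfl⟩

lemma measurable_encard_inter {B : Set X} (hB : MeasurableSet B) :
    Measurable fun ω : Set X => (ω ∩ B).encard :=
  ENat.measurable_iff.2 (measurableSet_countEvent hB)

lemma measurableSet_finite_inter {B : Set X} (hB : MeasurableSet B) :
    MeasurableSet {ω : Set X | (ω ∩ B).Finite} := by
  have : {ω : Set X | (ω ∩ B).Finite} = (fun ω : Set X => (ω ∩ B).encard) ⁻¹' {⊤}ᶜ := by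
    ext ω
    simp [Set.encard_eq_top_iff]
  rw [this]
  exact measurable_encard_inter hB (measurableSet_singleton ⊤).compl

omit [MeasurableSpace X] in
lemma countEvent_zero (B : Set X) : countEvent B 0 = {ω : Set X | ω ∩ B = ∅} := by
  ext ω
  simp [countEvent]

lemma measurableSet_inter_eq_empty {B : Set X} (hB : MeasurableSet B) :
    MeasurableSet {ω : Set X | ω ∩ B = ∅} :=
  countEvent_zero B ▸ measurableSet_countEvent hB 0

def pointMeasure (ω : Set X) : Measure X := Measure.sum fun y : ω => Measure.dirac (y : X)

lemma pointMeasure_apply (ω : Set X) {B : Set X} (hB : MeasurableSet B) :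
    pointMeasure ω B = (ω ∩ B).encard := by
  simp only [pointMeasure, Measure.sum_apply _ hB, Measure.dirac_apply' _ hB]
  rw [tsum_subtype ω (B.indicator 1), Set.indicator_indicator, ← tsum_subtype]
  simp only [Pi.one_apply, tsum_set_one]

-- Truncated to configurations that are finite on `K`, so that all its measures are finite.
open Classical in
def finitePointKernel (K : Set X) (hK : MeasurableSet K) : Kernel (Set X) X where
  toFun ω := if (ω ∩ K).Finite then pointMeasure (ω ∩ K) else 0
  measurable' := by
    refine Measure.measurable_of_measurable_coe _ fun B hB => ?_
    simp only [apply_ite (fun m : Measure X => m B), pointMeasure_apply _ hB,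
      Measure.coe_zero, Pi.zero_apply]
    refine Measurable.ite (measurableSet_finite_inter hK) ?_ measurable_const
    simp only [Set.inter_assoc]
    exact (measurable_from_top (f := ENat.toENNReal)).comp (measurable_encard_inter (hK.inter hB))

lemma finitePointKernel_apply {K : Set X} (hK : MeasurableSet K) {ω : Set X}
    (hω : (ω ∩ K).Finite) {B : Set X} (hB : MeasurableSet B) :
    finitePointKernel K hK ω B = (ω ∩ K ∩ B).encard := by
  simp [finitePointKernel, hω, pointMeasure_apply _ hB]

instance (K : Set X) (hK : MeasurableSet K) (ω : Set X) :
    IsFiniteMeasure (finitePointKernel K hK ω) := by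
  by_cases hω : (ω ∩ K).Finite
  · refine ⟨?_⟩
    rw [finitePointKernel_apply hK hω MeasurableSet.univ, Set.inter_univ]
    simpa using hω.encard_lt_top
  · simp only [finitePointKernel, Kernel.coe_mk, hω, if_false]
    infer_instance

section Avoid

variable {Y : Type*}

def avoid (D : Set (Y × X)) : Set (Y × Set X) := {q | q.2 ∩ Prod.mk q.1 ⁻¹' D = ∅}

omit [MeasurableSpace X] in
lemma preimage_avoid (f : Y → Y) (g : X → X) (D : Set (Y × X)) :
    Prod.map f (Set.image g) ⁻¹' avoid D = avoid (Prod.map f g ⁻¹' D) := by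
  ext ⟨y, ω⟩
  simp [avoid, Set.eq_empty_iff_forall_notMem]

variable [MeasurableSpace Y]

lemma measurableSet_finite_inter_and_avoid {K : Set X} (hK : MeasurableSet K)
    {D : Set (Y × X)} (hD : MeasurableSet D) :
    MeasurableSet {q : Y × Set X | (q.2 ∩ K).Finite ∧ q.2 ∩ K ∩ Prod.mk q.1 ⁻¹' D = ∅} := by
  set κ := (finitePointKernel K hK).comap Prod.snd measurable_snd
  set t := (fun p : (Y × Set X) × X => (p.1.1, p.2)) ⁻¹' D
  have hκ := Kernel.measurable_kernel_prodMk_left_of_finite (κ := κ)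
    (hD.preimage (by fun_prop) : MeasurableSet t)
    fun q => by simp only [κ, Kernel.comap_apply]; infer_instance
  have : {q : Y × Set X | (q.2 ∩ K).Finite ∧ q.2 ∩ K ∩ Prod.mk q.1 ⁻¹' D = ∅} =
      {q | (q.2 ∩ K).Finite} ∩ (fun q => κ q (Prod.mk q ⁻¹' t)) ⁻¹' {0} := by
    ext q
    simp only [Set.mem_ofPred_eq, Set.mem_inter_iff, Set.mem_preimage, Set.mem_singleton_iff]
    refine and_congr_right fun hq => ?_
    change _ ↔ finitePointKernel K hK q.2 (Prod.mk q.1 ⁻¹' D) = 0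
    rw [finitePointKernel_apply hK hq (hD.preimage measurable_prodMk_left)]
    simp [Set.encard_eq_zero]
  rw [this]
  exact ((measurableSet_finite_inter hK).preimage measurable_snd).inter
    (hκ (measurableSet_singleton 0))

end Avoid

namespace IsPoissonPP

variable {Y : Type*} [MeasurableSpace Y] {μ : Measure X} {P : Measure (Set X)}

lemma isProbabilityMeasure (hP : IsPoissonPP μ P) : IsProbabilityMeasure P := ⟨hP.prob⟩

lemma measure_inter_eq_empty (hP : IsPoissonPP μ P) {C : Set X} (hC : MeasurableSet C)
    (hfin : μ C ≠ ∞) :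
    P {ω : Set X | ω ∩ C = ∅} = ENNReal.ofReal (Real.exp (-(μ C).toReal)) := by
  simpa [← countEvent_zero] using hP.marginal C hC hfin 0

lemma ae_inter_eq_empty (hP : IsPoissonPP μ P) {N : Set X} (hN : μ N = 0) :
    ∀ᵐ ω ∂P, ω ∩ N = ∅ := by
  have := hP.isProbabilityMeasure
  have hN' := measurableSet_toMeasurable μ N
  have hone : P {ω : Set X | ω ∩ toMeasurable μ N = ∅} = P Set.univ := by
    rw [hP.measure_inter_eq_empty hN' (by simp [hN]), measure_toMeasurable, hN]
    simp
  filter_upwards [(ae_mem_iff_measure_eq (measurableSet_inter_eq_empty hN').nullMeasurableSet).2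
    hone] with ω (hω : ω ∩ toMeasurable μ N = ∅)
  exact Set.subset_empty_iff.1 (hω ▸ Set.inter_subset_inter_right ω (subset_toMeasurable μ N))

lemma ae_finite_inter (hP : IsPoissonPP μ P) {C : Set X} (hC : MeasurableSet C)
    (hfin : μ C ≠ ∞) : ∀ᵐ ω ∂P, (ω ∩ C).Finite := by
  have := hP.isProbabilityMeasure
  have hunion : {ω : Set X | (ω ∩ C).Finite} = ⋃ k : ℕ, countEvent C k := by
    ext ω
    simp only [Set.mem_ofPred_eq, Set.mem_iUnion, countEvent, ← Set.encard_ne_top_iff,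
      ENat.ne_top_iff_exists]
    exact exists_congr fun k => eq_comm
  have hdisj : Pairwise (Function.onFun Disjoint fun k : ℕ => countEvent C k) := by
    refine fun i j hij => Set.disjoint_left.2 fun ω hi hj => hij ?_
    simp only [countEvent, Set.mem_ofPred_eq] at hi hj
    exact_mod_cast hi.symm.trans hj
  refine (ae_mem_iff_measure_eq (measurableSet_finite_inter hC).nullMeasurableSet).2 ?_
  rw [hunion, measure_iUnion hdisj (measurableSet_countEvent hC), measure_univ]
  have hsum := hasSum_one_poissonMeasure (μ C).toNNReal
  simp only [ENNReal.coe_toNNReal_eq_toReal] at hsum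
  simp_rw [hP.marginal C hC hfin]
  rw [← ENNReal.ofReal_tsum_of_nonneg (fun k => by positivity) hsum.summable, hsum.tsum_eq,
    ENNReal.ofReal_one]

lemma nullMeasurableSet_avoid [SigmaFinite μ] (hP : IsPoissonPP μ P) (m : Measure Y)
    {D : Set (Y × X)} (hD : MeasurableSet D) : NullMeasurableSet (avoid D) (m.prod P) := by
  set K := spanningSets μ
  have hM : MeasurableSet (⋂ j, {q : Y × Set X | (q.2 ∩ K j).Finite ∧
      q.2 ∩ K j ∩ Prod.mk q.1 ⁻¹' D = ∅}) :=
    .iInter fun j => measurableSet_finite_inter_and_avoid (measurableSet_spanningSets μ j) hD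
  refine hM.nullMeasurableSet.congr (eventuallyEq_set.2 ?_)
  have hfin : ∀ᵐ ω ∂P, ∀ j, (ω ∩ K j).Finite := ae_all_iff.2 fun j =>
    hP.ae_finite_inter (measurableSet_spanningSets μ j) (measure_spanningSets_lt_top μ j).ne
  filter_upwards [Measure.quasiMeasurePreserving_snd.ae hfin] with q hq
  simp only [avoid, Set.mem_iInter, Set.mem_ofPred_eq, hq, true_and,
    Set.eq_empty_iff_forall_notMem]
  exact ⟨fun h x hx => h (spanningSetsIndex μ x) x ⟨⟨hx.1, mem_spanningSetsIndex μ x⟩, hx.2⟩,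
    fun h _ x hx => h x ⟨hx.1.1, hx.2⟩⟩

lemma ae_mem_avoid_of_null [SigmaFinite μ] (hP : IsPoissonPP μ P) {m : Measure Y}
    {E : Set (Y × X)} (hE : MeasurableSet E) (h : m.prod μ E = 0) :
    ∀ᵐ q ∂m.prod P, q ∈ avoid E := by
  have := hP.isProbabilityMeasure
  refine Measure.ae_prod_mem_of_ae_ae_mem₀ (hP.nullMeasurableSet_avoid m hE) ?_
  filter_upwards [Measure.measure_ae_null_of_prod_null h] with y hy
  exact hP.ae_inter_eq_empty hy

lemma avoid_ae_eq [SigmaFinite μ] (hP : IsPoissonPP μ P) {m : Measure Y}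
    {D D' : Set (Y × X)} (hD : MeasurableSet D) (hD' : MeasurableSet D')
    (h : D =ᵐ[m.prod μ] D') : avoid D =ᵐ[m.prod P] avoid D' := by
  refine eventuallyEq_set.2 ?_
  filter_upwards [hP.ae_mem_avoid_of_null (hD.symmDiff hD') (measure_symmDiff_eq_zero_iff.2 h)]
    with q hq
  simp only [avoid, Set.mem_ofPred_eq, Set.eq_empty_iff_forall_notMem, Set.mem_inter_iff,
    Set.mem_preimage, Set.mem_symmDiff] at hq ⊢
  exact forall_congr' fun x => by have := hq x; tauto

theorem ae_measure_slice_eq_zero [SigmaFinite μ] (hP : IsPoissonPP μ P) {m : Measure Y}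
    (hm : m ≠ 0) {S : Y → Y} {T : X → X} (hS : Measurable S) (hT : Measurable T)
    (herg : QuasiErgodic (Prod.map S (Set.image T)) (m.prod P)) {D : Set (Y × X)}
    (hD : MeasurableSet D) (hfin : ∀ y, μ (Prod.mk y ⁻¹' D) ≠ ∞)
    (hinv : Prod.map S T ⁻¹' D =ᵐ[m.prod μ] D) :
    ∀ᵐ y ∂m, μ (Prod.mk y ⁻¹' D) = 0 := by
  have := hP.isProbabilityMeasure
  have hslice_meas (y : Y) : MeasurableSet (Prod.mk y ⁻¹' avoid D) :=
    measurableSet_inter_eq_empty (hD.preimage measurable_prodMk_left)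
  have hslice (y : Y) : P (Prod.mk y ⁻¹' avoid D) =
      ENNReal.ofReal (Real.exp (-(μ (Prod.mk y ⁻¹' D)).toReal)) :=
    hP.measure_inter_eq_empty (hD.preimage measurable_prodMk_left) (hfin y)
  have hinvS : Prod.map S (Set.image T) ⁻¹' avoid D =ᵐ[m.prod P] avoid D := by
    rw [preimage_avoid]
    exact hP.avoid_ae_eq (hD.preimage (hS.prodMap hT)) hD hinv
  rcases herg.ae_empty_or_univ₀ (hP.nullMeasurableSet_avoid m hD) hinvS with h | h
  · refine absurd (ae_eq_bot.1 (eventually_false_iff_eq_bot.1 ?_)) hm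
    filter_upwards [Measure.measure_ae_null_of_prod_null (ae_eq_empty.1 h)] with y hy
    simp only [hslice, Pi.zero_apply, ENNReal.ofReal_eq_zero] at hy
    exact (Real.exp_pos _).not_ge hy
  · filter_upwards [Measure.measure_ae_null_of_prod_null (ae_eq_univ.1 h)] with y hy
    rw [Pi.zero_apply, Set.preimage_compl, prob_compl_eq_zero_iff (hslice_meas y), hslice,
      ENNReal.ofReal_eq_one, Real.exp_eq_one_iff, neg_eq_zero, ENNReal.toReal_eq_zero_iff] at hy
    exact hy.resolve_right (hfin y)

end IsPoissonPP

end

theorem poisson_paper_stmt12_general {X : Type*} [MeasurableSpace X] (μ : Measure X)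
    [SigmaFinite μ] (hinf : μ Set.univ = ⊤)
    (T : X → X) (hT : MeasurePreserving T μ μ)
    (P : Measure (Set X)) (hP : IsPoissonPP μ P)
    (hprod : Ergodic (Prod.map T (Set.image T)) (μ.prod P))
    (Φ : X → X → ℝ) (hmeas : Measurable (Function.uncurry Φ))
    (hint : ∀ x, Integrable (Φ x) μ)
    (hequiv : ∀ᵐ p ∂(μ.prod μ), Φ (T p.1) (T p.2) = Φ p.1 p.2) :
    ∀ᵐ x ∂μ, Φ x =ᵐ[μ] 0 := by
  have hμ : μ ≠ 0 := fun h => by simp [h] at hinf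
  have hlevel (n : ℕ) : ∀ᵐ x ∂μ, μ {y | (n + 1 : ℝ)⁻¹ < |Φ x y|} = 0 := by
    refine hP.ae_measure_slice_eq_zero hμ hT.measurable hT.measurable hprod.quasiErgodic
      (D := {p | (n + 1 : ℝ)⁻¹ < |Φ p.1 p.2|}) (measurableSet_lt measurable_const hmeas.abs)
      (fun x => ((hint x).measure_norm_gt_lt_top (by positivity)).ne) ?_
    filter_upwards [hequiv] with p hp
    exact congrArg (fun r => (n + 1 : ℝ)⁻¹ < |r|) hp
  filter_upwards [ae_all_iff.2 hlevel] with x hx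
  refine measure_mono_null (fun y (hy : Φ x y ≠ 0) => ?_) (measure_iUnion_null hx)
  obtain ⟨n, hn⟩ := exists_nat_one_div_lt (abs_pos.2 hy)
  exact Set.mem_iUnion.2 ⟨n, by simpa [one_div] using hn⟩

/-- Let `T` be a conservative ergodic measure-preserving transformation of an
infinite σ-finite measure space and suppose the Poisson product `T × T*` is ergodic (where
`T* = Set.image T` is the Poisson suspension, acting on the Poisson measure `P = μ*`).
Then any `T`-equivariant measurable map `Φ : X → L¹(μ)` (i.e. `Φ_{Tx}(Ty) = Φ_x(y)` a.e.)
is zero: `Φ_x = 0` in `L¹(μ)` for μ-a.e. `x`. -/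
theorem poisson_paper_stmt12 {X : Type*} [MeasurableSpace X] (μ : Measure X)
    [SigmaFinite μ] [NullSingletonClass μ] (hinf : μ Set.univ = ⊤)
    (T : X → X) (hT : MeasurePreserving T μ μ) (hc : Conservative T μ) (herg : Ergodic T μ)
    (P : Measure (Set X)) [IsProbabilityMeasure P] (hP : IsPoissonPP μ P)
    (hprod : Ergodic (Prod.map T (Set.image T)) (μ.prod P))
    (Φ : X → X → ℝ) (hmeas : Measurable (Function.uncurry Φ))
    (hint : ∀ x, Integrable (Φ x) μ)
    (hequiv : ∀ᵐ p ∂(μ.prod μ), Φ (T p.1) (T p.2) = Φ p.1 p.2) :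
    ∀ᵐ x ∂μ, Φ x =ᵐ[μ] 0 :=
  poisson_paper_stmt12_general μ hinf T hT P hP hprod Φ hmeas hint hequiv
end
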